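/- For a labeled poset (P,ω) with fixed s ∈ P, the coefficient of q^m in (1 − q^p)·G_{P;s}(q) counts the (P,ω;s)-partitions g of size m with g(s) = 0, where p = |P|. Equivalently, (1−q^p)·G_{P;s}(q) = Σ_{g} q^{|g|} over (P,ω;s)-partitions g with g(s) = 0. -/

import Mathlib

open Finset Polynomial
open scoped Classical

/-- The set of linear extensions of a finite poset `P`, i.e. order-preserving
bijections `P ≃ Fin n`. -/
noncomputable def linExts (P : Type) [Fintype P] [PartialOrder P] (n : ℕ) :
    Finset (P ≃ Fin n) :=
  Finset.univ.filter fun f => ∀ x y : P, x ≤ y → f x ≤ f y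

/-- The word of a linear extension `f` with respect to the labeling `ω`. -/
def word {P : Type} {n : ℕ} (ω : P → ℕ) (f : P ≃ Fin n) : Fin n → ℕ :=
  fun i => ω (f.symm i)

/-- The major index of a word: the sum of the (1-indexed) descent positions. -/
def majW {n : ℕ} (w : Fin n → ℕ) : ℕ :=
  ∑ i : Fin n, if h : (i : ℕ) + 1 < n then
    (if w ⟨(i : ℕ) + 1, h⟩ < w i then (i : ℕ) + 1 else 0) else 0

/-- The number of inversions of a word. -/
noncomputable def invW {n : ℕ} (w : Fin n → ℕ) : ℕ :=
  ((Finset.univ : Finset (Fin n × Fin n)).filter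
    (fun p => p.1 < p.2 ∧ w p.2 < w p.1)).card

/-- Major index `q`-analogue of the number of linear extensions of `(P, ω)`. -/
noncomputable def eMaj (P : Type) [Fintype P] [PartialOrder P] (ω : P → ℕ) :
    Polynomial ℤ :=
  ∑ f ∈ linExts P (Fintype.card P), Polynomial.X ^ majW (word ω f)

/-- Inversion `q`-analogue of the number of linear extensions of `(P, ω)`. -/
noncomputable def eInv (P : Type) [Fintype P] [PartialOrder P] (ω : P → ℕ) :
    Polynomial ℤ :=
  ∑ f ∈ linExts P (Fintype.card P), Polynomial.X ^ invW (word ω f)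

/-- Major index `q`-analogue of linear extensions whose last letter is the label
of an element of `S`. -/
noncomputable def eMajEndIn (P : Type) [Fintype P] [PartialOrder P]
    (ω : P → ℕ) (S : Set P) : Polynomial ℤ :=
  ∑ f ∈ (linExts P (Fintype.card P)).filter (fun f => ∃ s ∈ S, ∀ x, f x ≤ f s),
    Polynomial.X ^ majW (word ω f)

/-- The Gaussian binomial coefficient `[n choose k]_q`, defined by the
`q`-Pascal recurrence. -/
noncomputable def qBinom : ℕ → ℕ → Polynomial ℤ
  | _, 0 => 1
  | 0, _ + 1 => 0
  | n + 1, k + 1 => qBinom n k + Polynomial.X ^ (k + 1) * qBinom n (k + 1)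

/-- `(P,ω)`-partition. -/
def IsPPart {α : Type} [PartialOrder α] (ω : α → ℕ) (f : α → ℕ) : Prop :=
  ∀ s t : α, s ≤ t → f t ≤ f s ∧ (ω t < ω s → f t < f s)

/-- `(P,ω;s)`-partition. -/
def IsPPartS {α : Type} [PartialOrder α] (ω : α → ℕ) (s : α) (f : α → ℕ) : Prop :=
  IsPPart ω f ∧ (∀ t, f s ≤ f t) ∧ ∀ t, t ≠ s → f s = f t → ω t < ω s

/-- Generating function by size for the maps `α → ℕ` satisfying `pred`. -/
noncomputable def GPart (α : Type) [Fintype α] (pred : (α → ℕ) → Prop) :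
    PowerSeries ℚ :=
  PowerSeries.mk fun m => (Set.ncard {f : α → ℕ | pred f ∧ ∑ t, f t = m} : ℚ)

/-
Adding 1 to every value maps the `(P,ω;s)`-partitions of size `n` bijectively onto those of size
`n + |P|` with `g(s) ≥ 1`: all defining conditions compare values, so they are invariant under the
shift, and `g(s) ≥ 1` forces `g ≥ 1` everywhere because `s` carries the minimum. Splitting the
`(P,ω;s)`-partitions by whether `g(s) = 0` thus gives `G = G₀ + q^{|P|} G`.
-/

section GeneratingFunction

variable {α : Type} [Fintype α]

lemma finite_setOf_sum_eq (m : ℕ) : {f : α → ℕ | ∑ t, f t = m}.Finite :=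
  (piAntidiag univ m).finite_toSet.subset fun f hf => by simpa using hf

lemma sum_add_one (g : α → ℕ) : ∑ t, (g + 1) t = ∑ t, g t + Fintype.card α := by
  simp [sum_add_distrib]

lemma coeff_X_pow_mul_GPart (pred : (α → ℕ) → Prop) (p m : ℕ) :
    PowerSeries.coeff m ((PowerSeries.X : PowerSeries ℚ) ^ p * GPart α pred) =
      (Set.ncard {g : α → ℕ | pred g ∧ ∑ t, g t + p = m} : ℚ) := by
  rw [PowerSeries.coeff_X_pow_mul', GPart]
  split_ifs with hpm
  · rw [PowerSeries.coeff_mk]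
    congr 3
    ext g
    exact and_congr_right fun _ => by omega
  · have hempty : {g : α → ℕ | pred g ∧ ∑ t, g t + p = m} = ∅ :=
      Set.eq_empty_of_forall_notMem fun g hg => hpm (hg.2 ▸ Nat.le_add_left p _)
    simp [hempty]

lemma image_add_one_eq (pred : (α → ℕ) → Prop) (s : α) (hshift : ∀ g, pred (g + 1) ↔ pred g)
    (hmin : ∀ g, pred g → ∀ t, g s ≤ g t) (m : ℕ) :
    (· + 1) '' {g : α → ℕ | pred g ∧ ∑ t, g t + Fintype.card α = m} =
      {f : α → ℕ | pred f ∧ ∑ t, f t = m} \ {f | f s = 0} := by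
  ext f
  simp only [Set.mem_image, Set.mem_ofPred_eq, Set.mem_sdiff]
  constructor
  · rintro ⟨g, ⟨hg, hsum⟩, rfl⟩
    exact ⟨⟨(hshift g).2 hg, sum_add_one g ▸ hsum⟩, by simp⟩
  · rintro ⟨⟨hf, hsum⟩, hs⟩
    have hf_eq : f - 1 + 1 = f := by
      ext t
      have := hmin f hf t
      simp only [Pi.add_apply, Pi.sub_apply, Pi.one_apply]
      omega
    refine ⟨f - 1, ⟨(hshift _).1 (hf_eq ▸ hf), ?_⟩, hf_eq⟩
    rw [← sum_add_one, hf_eq, hsum]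

lemma GPart_eq_add_X_pow_mul (pred : (α → ℕ) → Prop) (s : α)
    (hshift : ∀ g, pred (g + 1) ↔ pred g) (hmin : ∀ g, pred g → ∀ t, g s ≤ g t) :
    GPart α pred =
      GPart α (fun g => pred g ∧ g s = 0) + PowerSeries.X ^ Fintype.card α * GPart α pred := by
  ext m
  have hzero : {f : α → ℕ | (pred f ∧ f s = 0) ∧ ∑ t, f t = m} =
      {f | pred f ∧ ∑ t, f t = m} ∩ {f | f s = 0} := by
    ext f
    simp only [Set.mem_ofPred_eq, Set.mem_inter_iff]
    tauto
  rw [map_add, coeff_X_pow_mul_GPart, GPart, GPart, PowerSeries.coeff_mk, PowerSeries.coeff_mk,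
    ← Set.ncard_image_of_injective {g | pred g ∧ ∑ t, g t + Fintype.card α = m}
      (add_left_injective 1), image_add_one_eq pred s hshift hmin,
    hzero, ← Nat.cast_add,
    Set.ncard_inter_add_ncard_sdiff_eq_ncard _ _ ((finite_setOf_sum_eq m).subset fun f hf => hf.2)]

end GeneratingFunction

lemma isPPartS_add_one_iff {α : Type} [PartialOrder α] (ω : α → ℕ) (s : α) (g : α → ℕ) :
    IsPPartS ω s (g + 1) ↔ IsPPartS ω s g := by
  simp only [IsPPartS, IsPPart, Pi.add_apply, Pi.one_apply, add_le_add_iff_right,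
    add_lt_add_iff_right, add_left_inj]

theorem one_sub_pow_mul_GPartS_general (P : Type) [Fintype P] [PartialOrder P]
    (ω : P → ℕ) (s : P) :
    (1 - (PowerSeries.X : PowerSeries ℚ) ^ Fintype.card P) *
        GPart P (IsPPartS ω s) =
      GPart P (fun g => IsPPartS ω s g ∧ g s = 0) := by
  have hsplit := GPart_eq_add_X_pow_mul (IsPPartS ω s) s (isPPartS_add_one_iff ω s)
    fun _ hg => hg.2.1
  rw [sub_mul, one_mul, sub_eq_iff_eq_add, ← hsplit]

/-- `(1 - q^p)·G_{P;s}(q)` is the generating function for `(P,ω;s)`-partitions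
`g` with `g(s) = 0`. -/
theorem one_sub_pow_mul_GPartS (P : Type) [Fintype P] [PartialOrder P]
    (ω : P → ℕ) (hinj : Function.Injective ω) (s : P) :
    (1 - (PowerSeries.X : PowerSeries ℚ) ^ Fintype.card P) *
        GPart P (IsPPartS ω s) =
      GPart P (fun g => IsPPartS ω s g ∧ g s = 0) :=
  one_sub_pow_mul_GPartS_general P ω s
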